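/- Let T be an optimal irreducible 2WCST whose root is a less-than test ⟨< r⟩ with 2 < r ≤ n−1, whose <-branch is rooted at an equal-to test ⟨= m⟩ on a maximum-weight key m with w_m ≥ (3/7)·w(T); let T₁ be the ≠-branch subtree of ⟨= m⟩, let T₂ be the ≥-branch subtree of ⟨< r⟩, and let the root of T₂ be a test node on a key i with =/≥-branch subtree T₃ and ≠/<-branch subtree T₄. If w(T₃) ≥ (1/3)·w(T₂), then the tree T' obtained by rotating ⟨= m⟩ to the root and then rotating the test on i to be the ≠-child of ⟨= m⟩ — so that in T' the leaf m is one level higher, T₃ keeps its depth, and T₁ and T₄ are each one level deeper — is a valid 2WCST rooted at an equal-to test with cost(T') ≤ cost(T). -/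

import Mathlib

/-- Binary search trees with two-way comparisons (2WCST):
leaves are labelled by keys, internal nodes are equal-to tests `eqNode k yes no`
or less-than tests `ltNode k yes no` (yes-branch taken when `q = k`, resp. `q < k`). -/
inductive CTree where
  | leaf : ℕ → CTree
  | eqNode : ℕ → CTree → CTree → CTree
  | ltNode : ℕ → CTree → CTree → CTree
deriving DecidableEq

namespace CTree

/-- The key labelling the leaf reached by query `q`. -/
def search : CTree → ℕ → ℕ
  | leaf k, _ => k
  | eqNode k y nb, q => if q = k then y.search q else nb.search q
  | ltNode k y nb, q => if q < k then y.search q else nb.search q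

/-- The depth of the leaf reached by query `q`. -/
def searchDepth : CTree → ℕ → ℕ
  | leaf _, _ => 0
  | eqNode k y nb, q => (if q = k then y.searchDepth q else nb.searchDepth q) + 1
  | ltNode k y nb, q => (if q < k then y.searchDepth q else nb.searchDepth q) + 1

/-- All keys appearing in the tree (leaf labels and test keys). -/
def keys : CTree → Finset ℕ
  | leaf k => {k}
  | eqNode k y nb => insert k (y.keys ∪ nb.keys)
  | ltNode k y nb => insert k (y.keys ∪ nb.keys)

/-- `T` is a valid 2WCST for the instance with key set `K = {1, …, n}`:
all keys used belong to `K` and every query `q ∈ K` reaches a leaf labelled `q`. -/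
def ValidFor (n : ℕ) (T : CTree) : Prop :=
  T.keys ⊆ Finset.Icc 1 n ∧ ∀ q ∈ Finset.Icc 1 n, T.search q = q

/-- The cost of `T`: `∑_{k ∈ K} w_k · depth_T(k)`. -/
noncomputable def cost (w : ℕ → ℝ) (n : ℕ) (T : CTree) : ℝ :=
  ∑ k ∈ Finset.Icc 1 n, w k * T.searchDepth k

/-- `T` is an optimal 2WCST for the instance. -/
noncomputable def OptimalFor (w : ℕ → ℝ) (n : ℕ) (T : CTree) : Prop :=
  ValidFor n T ∧ ∀ T' : CTree, ValidFor n T' → cost w n T ≤ cost w n T'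

/-- `w(S)`: total weight of the keys labelling the leaves of a subtree. -/
noncomputable def wt (w : ℕ → ℝ) : CTree → ℝ
  | leaf k => w k
  | eqNode _ y nb => wt w y + wt w nb
  | ltNode _ y nb => wt w y + wt w nb

/-- The side-weight of a node. -/
noncomputable def sw (w : ℕ → ℝ) : CTree → ℝ
  | leaf _ => 0
  | eqNode k _ _ => w k
  | ltNode _ y nb => min (wt w y) (wt w nb)

/-- `Occurs s T`: `s` occurs as a subtree (node) of `T`. -/
inductive Occurs : CTree → CTree → Prop
  | refl (t : CTree) : Occurs t t
  | eqYes {s k y nb} : Occurs s y → Occurs s (eqNode k y nb)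
  | eqNo {s k y nb} : Occurs s nb → Occurs s (eqNode k y nb)
  | ltYes {s k y nb} : Occurs s y → Occurs s (ltNode k y nb)
  | ltNo {s k y nb} : Occurs s nb → Occurs s (ltNode k y nb)

/-- `v` is a child of node `u`. -/
def IsChildOf (v u : CTree) : Prop :=
  match u with
  | leaf _ => False
  | eqNode _ y nb => v = y ∨ v = nb
  | ltNode _ y nb => v = y ∨ v = nb

/-- The root of the tree is an equal-to test. -/
def RootEq : CTree → Prop
  | eqNode _ _ _ => True
  | _ => False

/-- `ReplaceAt s t T T'`: `T'` is obtained from `T` by replacing one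
occurrence of the subtree `s` by `t`, leaving the rest of `T` unchanged. -/
inductive ReplaceAt (s t : CTree) : CTree → CTree → Prop
  | here : ReplaceAt s t s t
  | eqYes {k y y' nb} : ReplaceAt s t y y' → ReplaceAt s t (eqNode k y nb) (eqNode k y' nb)
  | eqNo {k y nb nb'} : ReplaceAt s t nb nb' → ReplaceAt s t (eqNode k y nb) (eqNode k y nb')
  | ltYes {k y y' nb} : ReplaceAt s t y y' → ReplaceAt s t (ltNode k y nb) (ltNode k y' nb)
  | ltNo {k y nb nb'} : ReplaceAt s t nb nb' → ReplaceAt s t (ltNode k y nb) (ltNode k y nb')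

/-- Irreducibility relative to the set `Q` of queries that reach the current subtree:
every branch of every node is traversed by some query. -/
def IrredFrom : Finset ℕ → CTree → Prop
  | _, leaf _ => True
  | Q, eqNode k y nb =>
      (Q.filter (· = k)).Nonempty ∧ (Q.filter (· ≠ k)).Nonempty ∧
      IrredFrom (Q.filter (· = k)) y ∧ IrredFrom (Q.filter (· ≠ k)) nb
  | Q, ltNode k y nb =>
      (Q.filter (· < k)).Nonempty ∧ (Q.filter (fun q => ¬ q < k)).Nonempty ∧
      IrredFrom (Q.filter (· < k)) y ∧ IrredFrom (Q.filter (fun q => ¬ q < k)) nb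

/-- `T` is irreducible: no branch is redundant for the query set `{1, …, n}`. -/
def Irred (n : ℕ) (T : CTree) : Prop := IrredFrom (Finset.Icc 1 n) T

/-- The two kinds of comparison tests. -/
inductive TestKind where
  | eq : TestKind
  | lt : TestKind
deriving DecidableEq

/-- A test node `⟨? k⟩` on key `k` with `=/≥`-branch `hi` and `≠/<`-branch `lo`. -/
def mkTest : TestKind → ℕ → CTree → CTree → CTree
  | .eq, k, hi, lo => eqNode k hi lo
  | .lt, k, hi, lo => ltNode k lo hi

/-- The `=/≥`-outcome of a test of kind `t` on key `b`, applied to query `q`. -/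
def hiOutcome : TestKind → ℕ → ℕ → Prop
  | .eq, b, q => q = b
  | .lt, b, q => b ≤ q

instance (t : TestKind) (b q : ℕ) : Decidable (hiOutcome t b q) :=
  match t with
  | .eq => inferInstanceAs (Decidable (q = b))
  | .lt => inferInstanceAs (Decidable (b ≤ q))

/-- Number of leaves of a tree. -/
def numLeaves : CTree → ℕ
  | leaf _ => 1
  | eqNode _ y nb => y.numLeaves + nb.numLeaves
  | ltNode _ y nb => y.numLeaves + nb.numLeaves

end CTree


/-!
Rotating `⟨= m⟩` alone to the root lifts the leaf `m` by one level, keeps `T₁` in place and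
pushes `T₂` one level down; optimality of `T` therefore gives `w_m ≤ w(T₂)`. In `T'` the leaf `m`
is lifted, `T₃` stays in place and `T₁`, `T₄` go one level down, so
`cost(T') = cost(T) - w_m + (W - w_m - w(T₃))`. Since `W ≤ (7/3)·w_m` and
`w(T₃) ≥ w(T₂)/3 ≥ w_m/3`, this is at most `cost(T)`.
-/

namespace CTree

section MkTest

variable (t : TestKind) (i : ℕ) (hi lo : CTree)

theorem search_mkTest (q : ℕ) :
    (mkTest t i hi lo).search q = if hiOutcome t i q then hi.search q else lo.search q := by
  cases t
  · rfl
  · simp only [mkTest, search, hiOutcome, ← Nat.not_lt, ite_not]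

theorem searchDepth_mkTest (q : ℕ) :
    (mkTest t i hi lo).searchDepth q
      = (if hiOutcome t i q then hi.searchDepth q else lo.searchDepth q) + 1 := by
  cases t
  · rfl
  · simp only [mkTest, searchDepth, hiOutcome, ← Nat.not_lt, ite_not]

theorem keys_mkTest : (mkTest t i hi lo).keys = insert i (hi.keys ∪ lo.keys) := by
  cases t <;> simp [mkTest, keys, Finset.union_comm]

theorem irredFrom_mkTest_iff (Q : Finset ℕ) :
    IrredFrom Q (mkTest t i hi lo) ↔
      (Q.filter (hiOutcome t i)).Nonempty ∧ (Q.filter (¬ hiOutcome t i ·)).Nonempty ∧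
        IrredFrom (Q.filter (hiOutcome t i)) hi ∧
        IrredFrom (Q.filter (¬ hiOutcome t i ·)) lo := by
  cases t
  · rfl
  · have hhi : Q.filter (hiOutcome .lt i) = Q.filter (fun q => ¬ q < i) :=
      Finset.filter_congr fun _ _ => Nat.not_lt.symm
    have hlo : Q.filter (¬ hiOutcome .lt i ·) = Q.filter (· < i) :=
      Finset.filter_congr fun _ _ => Nat.not_le
    rw [hhi, hlo]
    exact ⟨fun ⟨h₁, h₂, h₃, h₄⟩ => ⟨h₂, h₁, h₄, h₃⟩,
      fun ⟨h₁, h₂, h₃, h₄⟩ => ⟨h₂, h₁, h₄, h₃⟩⟩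

variable {t i} in
theorem not_hiOutcome_of_lt_of_lt {a b q : ℕ} (ha : hiOutcome t i a) (hb : ¬ hiOutcome t i b)
    (hqa : q < a) (hqb : q < b) : ¬ hiOutcome t i q := by
  cases t <;> simp only [hiOutcome] at * <;> omega

end MkTest

theorem sum_eq_sum_filter_add_add_sum_filter_ne {α β : Type*} [DecidableEq α]
    [AddCommMonoid β] {Q : Finset α} {m : α} (hm : m ∈ Q) (p : α → Prop) [DecidablePred p]
    (hpm : ¬ p m) (f : α → β) :
    ∑ q ∈ Q, f q
      = ∑ q ∈ Q.filter p, f q + f m + ∑ q ∈ Q.filter (fun q => q ≠ m ∧ ¬ p q), f q := by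
  have herase : (Q.filter (¬ p ·)).erase m = Q.filter (fun q => q ≠ m ∧ ¬ p q) := by
    ext q
    simp only [Finset.mem_erase, Finset.mem_filter]
    tauto
  rw [← Finset.sum_filter_add_sum_filter_not Q p,
    ← Finset.add_sum_erase (Q.filter (¬ p ·)) f (Finset.mem_filter.2 ⟨hm, hpm⟩), herase,
    add_assoc]

theorem wt_eq_sum_of_irredFrom (w : ℕ → ℝ) :
    ∀ (S : CTree) {Q : Finset ℕ}, Q.Nonempty → IrredFrom Q S → (∀ q ∈ Q, S.search q = q) →
      wt w S = ∑ q ∈ Q, w q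
  | leaf k, Q, hne, _, hs => by
    obtain rfl : Q = {k} :=
      Finset.eq_singleton_iff_nonempty_unique_mem.2 ⟨hne, fun q hq => (hs q hq).symm⟩
    simp [wt]
  | eqNode k y nb, Q, _, ⟨hy, hnb, hirr_y, hirr_nb⟩, hs
  | ltNode k y nb, Q, _, ⟨hy, hnb, hirr_y, hirr_nb⟩, hs => by
    rw [wt, wt_eq_sum_of_irredFrom w y hy hirr_y, wt_eq_sum_of_irredFrom w nb hnb hirr_nb,
      Finset.sum_filter_add_sum_filter_not]
    all_goals
      intro q hq
      rw [Finset.mem_filter] at hq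
      simpa [search, hq.2] using hs q hq.1

theorem ValidFor.of_search_eq {n : ℕ} {T T' : CTree} (hT : ValidFor n T)
    (hkeys : T'.keys ⊆ T.keys) (hsearch : ∀ q, T'.search q = T.search q) : ValidFor n T' :=
  ⟨hkeys.trans hT.1, fun q hq => (hsearch q).trans (hT.2 q hq)⟩

theorem cost_add_eq_of_searchDepth_add {w : ℕ → ℝ} {n m : ℕ} {T T' : CTree}
    (hm : m ∈ Finset.Icc 1 n) (p : ℕ → Prop) [DecidablePred p]
    (hdepth : ∀ q, T'.searchDepth q + (if q = m then 1 else 0)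
      = T.searchDepth q + (if p q then 1 else 0)) :
    cost w n T' + w m = cost w n T + ∑ q ∈ (Finset.Icc 1 n).filter p, w q := by
  have hpoint : ∀ q, w q * T'.searchDepth q + (if q = m then w q else 0)
      = w q * T.searchDepth q + (if p q then w q else 0) := fun q => by
    have := congrArg (fun d : ℕ => w q * d) (hdepth q)
    split_ifs at this ⊢ <;> push_cast at this <;> linarith
  have hsum_m : ∑ q ∈ Finset.Icc 1 n, (if q = m then w q else 0) = w m := by simp [hm]
  rw [cost, cost, Finset.sum_filter, ← hsum_m, ← Finset.sum_add_distrib,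
    ← Finset.sum_add_distrib]
  exact Finset.sum_congr rfl fun q _ => hpoint q

section Rotation

variable {m r i : ℕ} {t : TestKind} {M T1 T2 T3 T4 : CTree}

theorem lt_of_irredFrom_ltNode_eqNode {Q : Finset ℕ}
    (h : IrredFrom Q (ltNode r (eqNode m M T1) T2)) : m < r := by
  obtain ⟨q, hq⟩ := h.2.2.1.1
  simp only [Finset.mem_filter] at hq
  omega

theorem not_hiOutcome_of_irredFrom_ltNode {Q : Finset ℕ}
    (h : IrredFrom Q (ltNode r T1 (mkTest t i T3 T4))) : ∀ q < r, ¬ hiOutcome t i q := by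
  obtain ⟨⟨a, ha⟩, ⟨b, hb⟩, -⟩ := (irredFrom_mkTest_iff t i T3 T4 _).1 h.2.2.2
  simp only [Finset.mem_filter] at ha hb
  exact fun q hq => not_hiOutcome_of_lt_of_lt ha.2 hb.2 (by omega) (by omega)

theorem search_rotate_eqNode (hmr : m < r) (q : ℕ) :
    (eqNode m M (ltNode r T1 T2)).search q = (ltNode r (eqNode m M T1) T2).search q := by
  by_cases hqm : q = m
  · subst hqm; simp [search, hmr]
  · simp [search, hqm]

theorem searchDepth_rotate_eqNode (hmr : m < r) (q : ℕ) :
    (eqNode m M (ltNode r T1 T2)).searchDepth q + (if q = m then 1 else 0)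
      = (ltNode r (eqNode m M T1) T2).searchDepth q + (if ¬ q < r then 1 else 0) := by
  by_cases hqm : q = m
  · subst hqm; simp [searchDepth, hmr]
  · by_cases hqr : q < r <;> simp [searchDepth, hqm, hqr]

theorem keys_rotate_eqNode_subset :
    (eqNode m M (ltNode r T1 T2)).keys ⊆ (ltNode r (eqNode m M T1) T2).keys := by
  intro k
  simp only [keys, Finset.mem_insert, Finset.mem_union]
  tauto

theorem search_rotate_mkTest (hmr : m < r) (hlo : ∀ q < r, ¬ hiOutcome t i q) (q : ℕ) :
    (eqNode m M (mkTest t i T3 (ltNode r T1 T4))).search q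
      = (ltNode r (eqNode m M T1) (mkTest t i T3 T4)).search q := by
  by_cases hqm : q = m
  · subst hqm; simp [search, hmr]
  · by_cases hqr : q < r
    · simp [search, search_mkTest, hqm, hqr, hlo q hqr]
    · by_cases hq : hiOutcome t i q <;> simp [search, search_mkTest, hqm, hqr, hq]

theorem searchDepth_rotate_mkTest (hmr : m < r) (hlo : ∀ q < r, ¬ hiOutcome t i q) (q : ℕ) :
    (eqNode m M (mkTest t i T3 (ltNode r T1 T4))).searchDepth q + (if q = m then 1 else 0)
      = (ltNode r (eqNode m M T1) (mkTest t i T3 T4)).searchDepth q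
        + (if q ≠ m ∧ ¬ hiOutcome t i q then 1 else 0) := by
  by_cases hqm : q = m
  · subst hqm; simp [searchDepth, hmr, hlo q hmr]
  · by_cases hqr : q < r
    · simp [searchDepth, searchDepth_mkTest, hqm, hqr, hlo q hqr]
    · by_cases hq : hiOutcome t i q <;> simp [searchDepth, searchDepth_mkTest, hqm, hqr, hq]

theorem keys_rotate_mkTest_subset :
    (eqNode m M (mkTest t i T3 (ltNode r T1 T4))).keys
      ⊆ (ltNode r (eqNode m M T1) (mkTest t i T3 T4)).keys := by
  intro k
  simp only [keys, keys_mkTest, Finset.mem_insert, Finset.mem_union]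
  tauto

theorem le_sum_of_optimalFor_ltNode_eqNode {w : ℕ → ℝ} {n : ℕ}
    (hopt : OptimalFor w n (ltNode r (eqNode m M T1) T2)) (hm : m ∈ Finset.Icc 1 n)
    (hmr : m < r) : w m ≤ ∑ q ∈ (Finset.Icc 1 n).filter (fun q => ¬ q < r), w q := by
  have hvalid : ValidFor n (eqNode m M (ltNode r T1 T2)) :=
    hopt.1.of_search_eq keys_rotate_eqNode_subset (search_rotate_eqNode hmr)
  have hcost := cost_add_eq_of_searchDepth_add (w := w) hm _
    (searchDepth_rotate_eqNode (M := M) (T1 := T1) (T2 := T2) hmr)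
  linarith [hopt.2 _ hvalid]

end Rotation

end CTree

open CTree in
theorem case_one_rotation_general
    (n : ℕ) (w : ℕ → ℝ)
    (r m i : ℕ) (t : TestKind) (M T1 T3 T4 : CTree)
    (hopt : OptimalFor w n
      (CTree.ltNode r (CTree.eqNode m M T1) (mkTest t i T3 T4)))
    (hirr : Irred n
      (CTree.ltNode r (CTree.eqNode m M T1) (mkTest t i T3 T4)))
    (hm : m ∈ Finset.Icc 1 n)
    (hheavy : (3 / 7 : ℝ) *
        wt w (CTree.ltNode r (CTree.eqNode m M T1) (mkTest t i T3 T4)) ≤ w m)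
    (hT3 : (1 / 3 : ℝ) * wt w (mkTest t i T3 T4) ≤ wt w T3) :
    ValidFor n (CTree.eqNode m M (mkTest t i T3 (CTree.ltNode r T1 T4))) ∧
    RootEq (CTree.eqNode m M (mkTest t i T3 (CTree.ltNode r T1 T4))) ∧
    cost w n (CTree.eqNode m M (mkTest t i T3 (CTree.ltNode r T1 T4))) ≤
      cost w n (CTree.ltNode r (CTree.eqNode m M T1) (mkTest t i T3 T4)) := by
  set Q := Finset.Icc 1 n
  have hsearch := hopt.1.2
  have hmr := lt_of_irredFrom_ltNode_eqNode hirr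
  have hlo := not_hiOutcome_of_irredFrom_ltNode hirr
  obtain ⟨-, hQ₂, -, hirr₂⟩ := id hirr
  obtain ⟨hQ₃, -, hirr₃, -⟩ := (irredFrom_mkTest_iff t i T3 T4 _).1 hirr₂
  have hW := wt_eq_sum_of_irredFrom w _ ⟨m, hm⟩ hirr hsearch
  have hW₂ := wt_eq_sum_of_irredFrom w _ hQ₂ hirr₂ fun q hq => by
    rw [Finset.mem_filter] at hq
    simpa [search, hq.2] using hsearch q hq.1
  have hW₃ := wt_eq_sum_of_irredFrom w _ hQ₃ hirr₃ fun q hq => by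
    simp only [Finset.mem_filter] at hq
    simpa [search, search_mkTest, hq.1.2, hq.2] using hsearch q hq.1.1
  have hQ₃_eq :
      (Q.filter (fun q => ¬ q < r)).filter (hiOutcome t i) = Q.filter (hiOutcome t i) := by
    rw [Finset.filter_filter]
    exact Finset.filter_congr fun q _ => ⟨And.right, fun hq => ⟨fun hqr => hlo q hqr hq, hq⟩⟩
  have hpart := sum_eq_sum_filter_add_add_sum_filter_ne hm _ (hlo m hmr) w
  have hcost := cost_add_eq_of_searchDepth_add (w := w) hm _
    (searchDepth_rotate_mkTest (M := M) (T1 := T1) (T3 := T3) (T4 := T4) hmr hlo)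
  have hm_le := le_sum_of_optimalFor_ltNode_eqNode hopt hm hmr
  refine ⟨hopt.1.of_search_eq keys_rotate_mkTest_subset (search_rotate_mkTest hmr hlo),
    trivial, ?_⟩
  rw [hQ₃_eq] at hW₃
  linarith

open CTree in
/-- **Case 1 of the proof of `λ⁺ ≤ 3/7`.** With `T = ⟨< r⟩(⟨= m⟩(M, T₁), ⟨? i⟩(T₃, T₄))`
optimal and irreducible, `2 < r ≤ n−1`, `m` a maximum-weight key with
`w_m ≥ (3/7)·w(T)`, and `w(T₃) ≥ (1/3)·w(T₂)`: the tree
`T' = ⟨= m⟩(M, ⟨? i⟩(T₃, ⟨< r⟩(T₁, T₄)))` obtained by the two rotations is a valid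
2WCST rooted at an equal-to test with `cost(T') ≤ cost(T)`. -/
theorem case_one_rotation
    (n : ℕ) (w : ℕ → ℝ) (hw : ∀ q ∈ Finset.Icc 1 n, 0 ≤ w q)
    (r m i : ℕ) (t : TestKind) (M T1 T3 T4 : CTree)
    (hr1 : 2 < r) (hr2 : r ≤ n - 1)
    (hopt : OptimalFor w n
      (CTree.ltNode r (CTree.eqNode m M T1) (mkTest t i T3 T4)))
    (hirr : Irred n
      (CTree.ltNode r (CTree.eqNode m M T1) (mkTest t i T3 T4)))
    (hm : m ∈ Finset.Icc 1 n)
    (hmax : ∀ k ∈ Finset.Icc 1 n, w k ≤ w m)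
    (hheavy : (3 / 7 : ℝ) *
        wt w (CTree.ltNode r (CTree.eqNode m M T1) (mkTest t i T3 T4)) ≤ w m)
    (hT3 : (1 / 3 : ℝ) * wt w (mkTest t i T3 T4) ≤ wt w T3) :
    ValidFor n (CTree.eqNode m M (mkTest t i T3 (CTree.ltNode r T1 T4))) ∧
    RootEq (CTree.eqNode m M (mkTest t i T3 (CTree.ltNode r T1 T4))) ∧
    cost w n (CTree.eqNode m M (mkTest t i T3 (CTree.ltNode r T1 T4))) ≤
      cost w n (CTree.ltNode r (CTree.eqNode m M T1) (mkTest t i T3 T4)) :=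
  case_one_rotation_general n w r m i t M T1 T3 T4 hopt hirr hm hheavy hT3
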